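/- Let {X_t}_{t=1}^T be a Markov chain on 𝒳, let S₁ be independent of X^T, let the battery dynamics S_{t+1} = S_t + Y_t − X_t hold, and suppose the policy is causal, i.e., for each t the conditional law of Y_t given (S₁, X^T, Y^{t−1}) depends only on (S₁, X^t, Y^{t−1}). Then I(S₁, X^T; Y^T) ≥ Σ_{t=1}^{T} I(X_t, S_t; Y_t | Y^{t−1}). -/

import Mathlib

/-! Since `S_t = S₁ + Σ_{i<t} (Y_i - X_i)`, the pair `(X_t, S_t)` is a function of `(S₁, X^T)`
and `Y^{t-1}`. Data processing therefore bounds each summand by `I(S₁, X^T; Y_t | Y^{t-1})`,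
and by the chain rule these bounds add up to `I(S₁, X^T; Y^T)`. -/

open Finset
open scoped Classical

namespace SmartMeter

/-! ### Basic information measures for finitely supported distributions.
All entropies and mutual informations are in bits (base-2 logarithms). -/

/-- Probability that the random variable `Z` takes the value `z` under the pmf `p`. -/
noncomputable def pr {Ω α : Type*} [Fintype Ω] [DecidableEq α]
    (p : Ω → ℝ) (Z : Ω → α) (z : α) : ℝ :=
  ∑ ω ∈ Finset.univ.filter (fun ω => Z ω = z), p ω

/-- Shannon entropy (in bits) of the random variable `Z` under the pmf `p`. -/
noncomputable def ent {Ω α : Type*} [Fintype Ω] [DecidableEq α]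
    (p : Ω → ℝ) (Z : Ω → α) : ℝ :=
  -∑ z ∈ Finset.univ.image Z, pr p Z z * Real.logb 2 (pr p Z z)

/-- Mutual information `I(A; B)`. -/
noncomputable def mutInfo {Ω α β : Type*} [Fintype Ω] [DecidableEq α] [DecidableEq β]
    (p : Ω → ℝ) (A : Ω → α) (B : Ω → β) : ℝ :=
  ent p A + ent p B - ent p (fun ω => (A ω, B ω))

/-- Conditional entropy `H(A | C)`. -/
noncomputable def condEnt {Ω α γ : Type*} [Fintype Ω] [DecidableEq α] [DecidableEq γ]
    (p : Ω → ℝ) (A : Ω → α) (C : Ω → γ) : ℝ :=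
  ent p (fun ω => (A ω, C ω)) - ent p C

/-- Conditional mutual information `I(A; B | C)`. -/
noncomputable def condMutInfo {Ω α β γ : Type*} [Fintype Ω] [DecidableEq α] [DecidableEq β]
    [DecidableEq γ] (p : Ω → ℝ) (A : Ω → α) (B : Ω → β) (C : Ω → γ) : ℝ :=
  ent p (fun ω => (A ω, C ω)) + ent p (fun ω => (B ω, C ω))
    - ent p (fun ω => (A ω, B ω, C ω)) - ent p C

/-- `p` is a probability mass function on the finite type `Ω`. -/
def IsPMF {Ω : Type*} [Fintype Ω] (p : Ω → ℝ) : Prop :=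
  (∀ ω, 0 ≤ p ω) ∧ ∑ ω, p ω = 1

/-- Extension of a pmf on `{0, …, n}` to an integer-indexed function (zero out of range). -/
noncomputable def extZ {n : ℕ} (f : Fin (n + 1) → ℝ) (k : ℤ) : ℝ :=
  if h : 0 ≤ k ∧ k ≤ (n : ℤ) then f ⟨k.toNat, by omega⟩ else 0

/-! ### The single-letter quantity `J*` -/

/-- `I(S - X; X)` for independent `X ~ PX` on `{0,…,mx}` and `S ~ θ` on `{0,…,ms}`. -/
noncomputable def iidMI (mx ms : ℕ) (PX : Fin (mx + 1) → ℝ) (θ : Fin (ms + 1) → ℝ) : ℝ :=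
  mutInfo (fun ω : Fin (mx + 1) × Fin (ms + 1) => PX ω.1 * θ ω.2)
    (fun ω => ((ω.2 : ℕ) : ℤ) - ((ω.1 : ℕ) : ℤ)) (fun ω => ω.1)

/-- `J* = min over pmfs θ on 𝒮 of I(S - X; X)`. -/
noncomputable def Jstar (mx ms : ℕ) (PX : Fin (mx + 1) → ℝ) : ℝ :=
  sInf {r : ℝ | ∃ θ : Fin (ms + 1) → ℝ, IsPMF θ ∧ iidMI mx ms PX θ = r}

/-! ### The structured policy `b*` -/

/-- `ξ(w) = Σ_{(x,s) : s - x = w} PX(x) θ(s)`, the pmf of `W = S - X`. -/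
noncomputable def xiOf (mx ms : ℕ) (PX : Fin (mx + 1) → ℝ) (θ : Fin (ms + 1) → ℝ)
    (w : ℤ) : ℝ :=
  ∑ x : Fin (mx + 1), ∑ s : Fin (ms + 1),
    if ((s : ℕ) : ℤ) - ((x : ℕ) : ℤ) = w then PX x * θ s else 0

/-- The structured policy with respect to `(θ, ξ)`:
`b(y|w) = PX(y) θ(y + w) / ξ(w)` for `y ∈ 𝒳 ∩ 𝒴₀(w)` (when `ξ(w) > 0`), else `0`. -/
noncomputable def bstar (mx my ms : ℕ) (PX : Fin (mx + 1) → ℝ) (θ : Fin (ms + 1) → ℝ)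
    (w : ℤ) (y : Fin (my + 1)) : ℝ :=
  if xiOf mx ms PX θ w = 0 then 0
  else extZ PX ((y : ℕ) : ℤ) * extZ θ (((y : ℕ) : ℤ) + w) / xiOf mx ms PX θ w

/-! ### Trajectory spaces, policies and induced joint laws.
Time is indexed from `0`; `ω = (s₁, x, y)` records the initial battery state `S₁ = ω.1`,
the demands `X_{t+1} = ω.2.1 t` and the outputs `Y_{t+1} = ω.2.2 t` for `t = 0, …, T-1`. -/

/-- Trajectories of horizon `T`. -/
abbrev Traj (mx my ms T : ℕ) :=
  Fin (ms + 1) × (Fin T → Fin (mx + 1)) × (Fin T → Fin (my + 1))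

variable {mx my ms T : ℕ}

/-- Demand at (0-based) time `t`, as an integer (junk value `0` for `t ≥ T`). -/
def Xat (ω : Traj mx my ms T) (t : ℕ) : ℤ :=
  if h : t < T then ((ω.2.1 ⟨t, h⟩ : ℕ) : ℤ) else 0

/-- Output at (0-based) time `t`, as an integer (junk value `0` for `t ≥ T`). -/
def Yat (ω : Traj mx my ms T) (t : ℕ) : ℤ :=
  if h : t < T then ((ω.2.2 ⟨t, h⟩ : ℕ) : ℤ) else 0

/-- Battery state at (0-based) time `t`: `S_{t+1} = S_t + Y_t - X_t`, `Sat ω 0 = S₁`. -/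
def Sat (ω : Traj mx my ms T) (t : ℕ) : ℤ :=
  ((ω.1 : ℕ) : ℤ) + ∑ i ∈ Finset.range t, (Yat ω i - Xat ω i)

/-- `W_t = S_t - X_t`. -/
def Wat (ω : Traj mx my ms T) (t : ℕ) : ℤ := Sat ω t - Xat ω t

/-- A general causal (class `Q_A`) randomized battery policy:
`q_t(y_t | x^t, s^t, y^{t-1})`; since `s^t` is determined by `(s₁, x^{t-1}, y^{t-1})`,
the policy is a function of `(x^t, s₁, y^{t-1})`. -/
def PolicyA (mx my ms : ℕ) : Type :=
  (t : ℕ) → (Fin (t + 1) → Fin (mx + 1)) → Fin (ms + 1) → (Fin t → Fin (my + 1)) →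
    Fin (my + 1) → ℝ

/-- A class-`Q_B` policy: `q_t(y_t | x_t, s_t, y^{t-1})`. -/
def PolicyB (mx my ms : ℕ) : Type :=
  (t : ℕ) → Fin (mx + 1) → ℤ → (Fin t → Fin (my + 1)) → Fin (my + 1) → ℝ

/-- The battery state `S_t` computed from `s₁` and the history `(x^t, y^{t-1})`. -/
def hstate {t : ℕ} (s1 : Fin (ms + 1)) (x : Fin (t + 1) → Fin (mx + 1))
    (y : Fin t → Fin (my + 1)) : ℤ :=
  ((s1 : ℕ) : ℤ) + ∑ i : Fin t, (((y i : ℕ) : ℤ) - ((x i.castSucc : ℕ) : ℤ))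

/-- Each `q_t(· | x^t, s^t, y^{t-1})` is a pmf on `𝒴`. -/
def CondPMFA (q : PolicyA mx my ms) : Prop :=
  ∀ (t : ℕ) (x : Fin (t + 1) → Fin (mx + 1)) (s1 : Fin (ms + 1)) (y : Fin t → Fin (my + 1)),
    (∀ yt, 0 ≤ q t x s1 y yt) ∧ ∑ yt, q t x s1 y yt = 1

/-- Feasibility of a class-`Q_A` policy: conditional pmfs supported on
`𝒴₀(s_t - x_t) = {y ∈ 𝒴 : s_t - x_t + y ∈ 𝒮}`. -/
def FeasibleA (q : PolicyA mx my ms) : Prop :=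
  CondPMFA q ∧
  ∀ (t : ℕ) (x : Fin (t + 1) → Fin (mx + 1)) (s1 : Fin (ms + 1)) (y : Fin t → Fin (my + 1)),
    ∀ yt, q t x s1 y yt ≠ 0 →
      0 ≤ hstate s1 x y - ((x (Fin.last t) : ℕ) : ℤ) + ((yt : ℕ) : ℤ) ∧
      hstate s1 x y - ((x (Fin.last t) : ℕ) : ℤ) + ((yt : ℕ) : ℤ) ≤ (ms : ℤ)

/-- Each `q_t(· | x_t, s_t, y^{t-1})` is a pmf on `𝒴`. -/
def CondPMFB (q : PolicyB mx my ms) : Prop :=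
  ∀ (t : ℕ) (xt : Fin (mx + 1)) (s : ℤ) (y : Fin t → Fin (my + 1)),
    (∀ yt, 0 ≤ q t xt s y yt) ∧ ∑ yt, q t xt s y yt = 1

/-- Feasibility of a class-`Q_B` policy. -/
def FeasibleB (q : PolicyB mx my ms) : Prop :=
  CondPMFB q ∧
  ∀ (t : ℕ) (xt : Fin (mx + 1)) (s : ℤ) (y : Fin t → Fin (my + 1)),
    0 ≤ s → s ≤ (ms : ℤ) →
    ∀ yt, q t xt s y yt ≠ 0 →
      0 ≤ s - ((xt : ℕ) : ℤ) + ((yt : ℕ) : ℤ) ∧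
      s - ((xt : ℕ) : ℤ) + ((yt : ℕ) : ℤ) ≤ (ms : ℤ)

/-- The demand prefix `x^t = (x_0, …, x_t)` of a trajectory. -/
def prefX (ω : Traj mx my ms T) (t : Fin T) : Fin ((t : ℕ) + 1) → Fin (mx + 1) :=
  fun i => ω.2.1 ⟨(i : ℕ), lt_of_le_of_lt (Nat.lt_succ_iff.mp i.isLt) t.isLt⟩

/-- The output prefix `y^{t-1} = (y_0, …, y_{t-1})` of a trajectory. -/
def prefY (ω : Traj mx my ms T) (t : Fin T) : Fin (t : ℕ) → Fin (my + 1) :=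
  fun i => ω.2.2 ⟨(i : ℕ), i.isLt.trans t.isLt⟩

/-- Joint law on trajectories induced by i.i.d. demand `PX`, initial battery pmf `PS1`
(independent of the demand), and a class-`Q_A` policy `q`. -/
noncomputable def jointA (PS1 : Fin (ms + 1) → ℝ) (PX : Fin (mx + 1) → ℝ)
    (q : PolicyA mx my ms) (T : ℕ) (ω : Traj mx my ms T) : ℝ :=
  PS1 ω.1 * ∏ t : Fin T,
    (PX (ω.2.1 t) * q (t : ℕ) (prefX ω t) ω.1 (prefY ω t) (ω.2.2 t))

/-- Weight of a demand trajectory under a Markov chain `(PX1, Qm)`. -/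
noncomputable def markovWt (PX1 : Fin (mx + 1) → ℝ) (Qm : Fin (mx + 1) → Fin (mx + 1) → ℝ)
    {T : ℕ} (x : Fin T → Fin (mx + 1)) : ℝ :=
  ∏ t : Fin T,
    if _h : (t : ℕ) = 0 then PX1 (x t)
    else Qm (x ⟨(t : ℕ) - 1, lt_of_le_of_lt (Nat.sub_le _ _) t.isLt⟩) (x t)

/-- Joint law on trajectories induced by Markov demand and a class-`Q_A` policy. -/
noncomputable def jointAMarkov (PS1 : Fin (ms + 1) → ℝ) (PX1 : Fin (mx + 1) → ℝ)
    (Qm : Fin (mx + 1) → Fin (mx + 1) → ℝ) (q : PolicyA mx my ms) (T : ℕ)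
    (ω : Traj mx my ms T) : ℝ :=
  PS1 ω.1 * markovWt PX1 Qm ω.2.1 *
    ∏ t : Fin T, q (t : ℕ) (prefX ω t) ω.1 (prefY ω t) (ω.2.2 t)

/-- Joint law on trajectories induced by Markov demand and a class-`Q_B` policy. -/
noncomputable def jointBMarkov (PS1 : Fin (ms + 1) → ℝ) (PX1 : Fin (mx + 1) → ℝ)
    (Qm : Fin (mx + 1) → Fin (mx + 1) → ℝ) (q : PolicyB mx my ms) (T : ℕ)
    (ω : Traj mx my ms T) : ℝ :=
  PS1 ω.1 * markovWt PX1 Qm ω.2.1 *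
    ∏ t : Fin T, q (t : ℕ) (ω.2.1 t) (Sat ω (t : ℕ)) (prefY ω t) (ω.2.2 t)

/-- The memoryless time-invariant policy `q_t(y | x, s) = b*(y | s - x)`, as a member of the
class of general causal policies. -/
noncomputable def structuredPolicyA (mx my ms : ℕ) (PX : Fin (mx + 1) → ℝ)
    (θ : Fin (ms + 1) → ℝ) : PolicyA mx my ms :=
  fun t x s1 y yt => bstar mx my ms PX θ (hstate s1 x y - ((x (Fin.last t) : ℕ) : ℤ)) yt

section InformationMeasures

variable {Ω α β γ δ : Type*} [Fintype Ω] {p : Ω → ℝ}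

lemma pr_nonneg [DecidableEq α] (hp : ∀ ω, 0 ≤ p ω) (Z : Ω → α) (z : α) : 0 ≤ pr p Z z :=
  Finset.sum_nonneg fun ω _ => hp ω

lemma le_pr_apply [DecidableEq α] (hp : ∀ ω, 0 ≤ p ω) (Z : Ω → α) (ω : Ω) :
    p ω ≤ pr p Z (Z ω) :=
  Finset.single_le_sum (fun ω _ => hp ω) (by simp)

lemma pr_apply_le_of_determined [DecidableEq α] [DecidableEq β] (hp : ∀ ω, 0 ≤ p ω)
    {Z : Ω → α} {W : Ω → β} (h : ∀ ω ω', Z ω = Z ω' → W ω = W ω') (ω : Ω) :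
    pr p Z (Z ω) ≤ pr p W (W ω) :=
  Finset.sum_le_sum_of_subset_of_nonneg
    (Finset.monotone_filter_right _ fun ω' _ hω' => h ω' ω hω') fun ω _ _ => hp ω

lemma sum_pr_image [DecidableEq α] (C : Ω → α) :
    ∑ c ∈ univ.image C, pr p C c = ∑ ω, p ω :=
  Finset.sum_fiberwise_of_maps_to (fun ω _ => mem_image_of_mem C (mem_univ ω)) p

lemma sum_pr_prod_left [DecidableEq α] [DecidableEq γ] (A : Ω → α) (C : Ω → γ) (c : γ) :
    ∑ a ∈ univ.image A, pr p (fun ω => (A ω, C ω)) (a, c) = pr p C c := by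
  rw [pr, ← Finset.sum_fiberwise_of_maps_to (g := A) (t := univ.image A)
    (fun ω _ => mem_image_of_mem A (mem_univ ω))]
  refine Finset.sum_congr rfl fun a _ => ?_
  rw [pr, Finset.filter_filter]
  simp only [Prod.mk.injEq, and_comm]

lemma ent_eq_neg_sum_mul_logb [DecidableEq α] (p : Ω → ℝ) (Z : Ω → α) :
    ent p Z = -∑ ω, p ω * Real.logb 2 (pr p Z (Z ω)) := by
  rw [ent, ← Finset.sum_fiberwise_of_maps_to (g := Z) (t := univ.image Z)
    (fun ω _ => mem_image_of_mem Z (mem_univ ω))]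
  congr 1
  refine Finset.sum_congr rfl fun z _ => ?_
  rw [pr, Finset.sum_mul]
  refine Finset.sum_congr rfl fun ω hω => ?_
  rw [(Finset.mem_filter.mp hω).2, pr]

lemma ent_congr [DecidableEq α] [DecidableEq β] {Z : Ω → α} {Z' : Ω → β}
    (h : ∀ ω ω', Z ω = Z ω' ↔ Z' ω = Z' ω') : ent p Z = ent p Z' := by
  have hpr : ∀ ω, pr p Z (Z ω) = pr p Z' (Z' ω) := fun ω =>
    Finset.sum_congr (Finset.filter_congr fun ω' _ => h ω' ω) fun _ _ => rfl
  simp only [ent_eq_neg_sum_mul_logb, hpr]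

lemma ent_eq_of_injective [DecidableEq α] [DecidableEq β] {Z : Ω → α} {Z' : Ω → β} {f : α → β}
    (hf : Function.Injective f) (h : ∀ ω, Z' ω = f (Z ω)) : ent p Z' = ent p Z :=
  ent_congr fun ω ω' => by rw [h, h, hf.eq_iff]

lemma sum_mul_div_pr_le [DecidableEq α] (hp : ∀ ω, 0 ≤ p ω) (Z : Ω → α) {g : α → ℝ}
    (hg : ∀ z, 0 ≤ g z) : ∑ ω, p ω * g (Z ω) / pr p Z (Z ω) ≤ ∑ z ∈ univ.image Z, g z := by
  rw [← Finset.sum_fiberwise_of_maps_to (g := Z) (t := univ.image Z)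
    (fun ω _ => mem_image_of_mem Z (mem_univ ω))]
  refine Finset.sum_le_sum fun z _ => ?_
  have hfiber : ∑ ω ∈ univ.filter (fun ω => Z ω = z), p ω * g (Z ω) / pr p Z (Z ω)
      = pr p Z z * g z / pr p Z z := by
    rw [pr, Finset.sum_mul, Finset.sum_div]
    exact Finset.sum_congr rfl fun ω hω => by rw [(Finset.mem_filter.mp hω).2, pr]
  rw [hfiber]
  rcases (pr_nonneg hp Z z).eq_or_lt with h0 | hpos
  · rw [← h0, zero_mul, zero_div]
    exact hg z
  · rw [mul_div_cancel_left₀ _ hpos.ne']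

lemma sum_pr_mul_pr_div_pr_le [DecidableEq α] [DecidableEq β] [DecidableEq γ]
    (hp : ∀ ω, 0 ≤ p ω) (A : Ω → α) (B : Ω → β) (C : Ω → γ) :
    ∑ z ∈ univ.image (fun ω => (A ω, B ω, C ω)),
        pr p (fun ω => (A ω, C ω)) (z.1, z.2.2) * pr p (fun ω => (B ω, C ω)) (z.2.1, z.2.2)
          / pr p C z.2.2
      ≤ ∑ ω, p ω := by
  calc _ ≤ ∑ z ∈ univ.image A ×ˢ univ.image B ×ˢ univ.image C,
          pr p (fun ω => (A ω, C ω)) (z.1, z.2.2) * pr p (fun ω => (B ω, C ω)) (z.2.1, z.2.2)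
            / pr p C z.2.2 := by
        refine Finset.sum_le_sum_of_subset_of_nonneg ?_ fun z _ _ => ?_
        · intro z hz
          obtain ⟨ω, -, rfl⟩ := Finset.mem_image.mp hz
          simp
        · exact div_nonneg (mul_nonneg (pr_nonneg hp _ _) (pr_nonneg hp _ _)) (pr_nonneg hp _ _)
    _ = ∑ c ∈ univ.image C, (∑ a ∈ univ.image A, pr p (fun ω => (A ω, C ω)) (a, c))
          * (∑ b ∈ univ.image B, pr p (fun ω => (B ω, C ω)) (b, c)) / pr p C c := by
        simp only [Finset.sum_product, Finset.sum_mul_sum, Finset.sum_div]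
        exact (Finset.sum_congr rfl fun a _ => Finset.sum_comm).trans Finset.sum_comm
    _ = ∑ c ∈ univ.image C, pr p C c * pr p C c / pr p C c := by
        simp only [sum_pr_prod_left]
    _ ≤ ∑ c ∈ univ.image C, pr p C c :=
        Finset.sum_le_sum fun c _ => (mul_self_div_self (pr p C c)).le
    _ = ∑ ω, p ω := sum_pr_image C

lemma condMutInfo_eq_sum_mul_logb [DecidableEq α] [DecidableEq β] [DecidableEq γ]
    (A : Ω → α) (B : Ω → β) (C : Ω → γ) :
    condMutInfo p A B C = ∑ ω, p ω *
      (Real.logb 2 (pr p (fun ω => (A ω, B ω, C ω)) (A ω, B ω, C ω)) + Real.logb 2 (pr p C (C ω))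
        - Real.logb 2 (pr p (fun ω => (A ω, C ω)) (A ω, C ω))
        - Real.logb 2 (pr p (fun ω => (B ω, C ω)) (B ω, C ω))) := by
  simp only [condMutInfo, ent_eq_neg_sum_mul_logb, mul_add, mul_sub,
    Finset.sum_add_distrib, Finset.sum_sub_distrib]
  ring

lemma one_sub_div_div_le_logb {a b c z : ℝ} (ha : 0 < a) (hb : 0 < b) (hc : 0 < c)
    (hz : 0 < z) :
    (1 - a * b / c / z) / Real.log 2
      ≤ Real.logb 2 z + Real.logb 2 c - Real.logb 2 a - Real.logb 2 b := by
  have h := Real.one_sub_inv_le_log_of_pos (show 0 < z * c / (a * b) by positivity)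
  rw [inv_div, Real.log_div (by positivity) (by positivity), Real.log_mul hz.ne' hc.ne',
    Real.log_mul ha.ne' hb.ne'] at h
  rw [div_le_iff₀ (Real.log_pos one_lt_two), div_div, mul_comm c z]
  refine h.trans_eq ?_
  simp only [Real.logb, sub_mul, add_mul, div_mul_cancel₀ _ (Real.log_pos one_lt_two).ne']
  ring

-- Gibbs' inequality in the form `-log r ≥ 1 - r`, applied pointwise to the ratio
-- `r = P(a,c) P(b,c) / (P(a,b,c) P(c))`, whose `p`-weighted sum is at most the total mass.
lemma condMutInfo_nonneg [DecidableEq α] [DecidableEq β] [DecidableEq γ]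
    (hp : ∀ ω, 0 ≤ p ω) (A : Ω → α) (B : Ω → β) (C : Ω → γ) :
    0 ≤ condMutInfo p A B C := by
  set Z := fun ω => (A ω, B ω, C ω)
  set AC := fun ω => (A ω, C ω)
  set BC := fun ω => (B ω, C ω)
  set g : α × β × γ → ℝ := fun z => pr p AC (z.1, z.2.2) * pr p BC (z.2.1, z.2.2) / pr p C z.2.2
  have hterm : ∀ ω, (p ω - p ω * g (Z ω) / pr p Z (Z ω)) / Real.log 2 ≤ p ω *
      (Real.logb 2 (pr p Z (Z ω)) + Real.logb 2 (pr p C (C ω))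
        - Real.logb 2 (pr p AC (AC ω)) - Real.logb 2 (pr p BC (BC ω))) := by
    intro ω
    rcases (hp ω).eq_or_lt with h0 | hpos
    · simp [← h0]
    have hZ : 0 < pr p Z (Z ω) := hpos.trans_le (le_pr_apply hp Z ω)
    have hAC : 0 < pr p AC (AC ω) :=
      hZ.trans_le (pr_apply_le_of_determined hp (fun _ _ h => by simp_all [Z, AC]) ω)
    have hBC : 0 < pr p BC (BC ω) :=
      hZ.trans_le (pr_apply_le_of_determined hp (fun _ _ h => by simp_all [Z, BC]) ω)
    have hC : 0 < pr p C (C ω) :=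
      hZ.trans_le (pr_apply_le_of_determined hp (fun _ _ h => by simp_all [Z]) ω)
    rw [mul_div_assoc, ← mul_one_sub, mul_div_assoc]
    exact mul_le_mul_of_nonneg_left (one_sub_div_div_le_logb hAC hBC hC hZ) hpos.le
  calc (0 : ℝ) ≤ (∑ ω, p ω - ∑ ω, p ω * g (Z ω) / pr p Z (Z ω)) / Real.log 2 := by
        refine div_nonneg (sub_nonneg.mpr ?_) (Real.log_pos one_lt_two).le
        refine (sum_mul_div_pr_le (g := g) hp Z fun z =>
          div_nonneg (mul_nonneg (pr_nonneg hp _ _) (pr_nonneg hp _ _)) (pr_nonneg hp _ _)).trans ?_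
        exact sum_pr_mul_pr_div_pr_le hp A B C
    _ = ∑ ω, (p ω - p ω * g (Z ω) / pr p Z (Z ω)) / Real.log 2 := by
        rw [← Finset.sum_sub_distrib, Finset.sum_div]
    _ ≤ _ := Finset.sum_le_sum fun ω _ => hterm ω
    _ = condMutInfo p A B C := (condMutInfo_eq_sum_mul_logb A B C).symm

lemma ent_eq_zero_of_subsingleton [DecidableEq α] [Subsingleton α] (hp : ∑ ω, p ω = 1)
    (Z : Ω → α) : ent p Z = 0 := by
  have hpr : ∀ ω, pr p Z (Z ω) = 1 := fun ω => by
    rw [pr, Finset.filter_true_of_mem fun ω' _ => Subsingleton.elim _ _, hp]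
  simp [ent_eq_neg_sum_mul_logb, hpr]

lemma mutInfo_congr_right [DecidableEq α] [DecidableEq β] [DecidableEq γ] (A : Ω → α)
    {B : Ω → β} {B' : Ω → γ} (h : ∀ ω ω', B ω = B ω' ↔ B' ω = B' ω') :
    mutInfo p A B = mutInfo p A B' := by
  rw [mutInfo, mutInfo, ent_congr h,
    ent_congr (Z := fun ω => (A ω, B ω)) (Z' := fun ω => (A ω, B' ω)) fun ω ω' => by
      simp only [Prod.mk.injEq, h]]

lemma condMutInfo_le_of_determined [DecidableEq α] [DecidableEq β] [DecidableEq γ]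
    [DecidableEq δ] (hp : ∀ ω, 0 ≤ p ω) {A : Ω → α} {B : Ω → δ} (Y : Ω → β) {C : Ω → γ}
    (hB : ∀ ω ω', A ω = A ω' → C ω = C ω' → B ω = B ω') :
    condMutInfo p B Y C ≤ condMutInfo p A Y C := by
  have hABC : ent p (fun ω => (A ω, B ω, C ω)) = ent p (fun ω => (A ω, C ω)) :=
    ent_congr fun ω ω' => by
      simp only [Prod.mk.injEq]
      exact ⟨fun h => ⟨h.1, h.2.2⟩, fun h => ⟨h.1, hB _ _ h.1 h.2, h.2⟩⟩
  have hAYBC : ent p (fun ω => (A ω, Y ω, B ω, C ω)) = ent p (fun ω => (A ω, Y ω, C ω)) :=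
    ent_congr fun ω ω' => by
      simp only [Prod.mk.injEq]
      exact ⟨fun h => ⟨h.1, h.2.1, h.2.2.2⟩,
        fun h => ⟨h.1, h.2.1, hB _ _ h.1 h.2.2, h.2.2⟩⟩
  have hYBC : ent p (fun ω => (Y ω, B ω, C ω)) = ent p (fun ω => (B ω, Y ω, C ω)) :=
    ent_congr fun ω ω' => by simp only [Prod.mk.injEq]; tauto
  have h := condMutInfo_nonneg hp A Y (fun ω => (B ω, C ω))
  simp only [condMutInfo] at h ⊢
  rw [hABC, hAYBC, hYBC] at h
  linarith

lemma mutInfo_eq_sum_condMutInfo [DecidableEq α] [DecidableEq β] (hp : ∑ ω, p ω = 1)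
    (A : Ω → α) (Y : ℕ → Ω → β) (T : ℕ) :
    mutInfo p A (fun ω (i : Fin T) => Y i ω)
      = ∑ t ∈ range T, condMutInfo p A (Y t) (fun ω (i : Fin t) => Y i ω) := by
  set H : ℕ → ℝ := fun k => ent p (fun ω => (A ω, fun i : Fin k => Y i ω))
  set F : ℕ → ℝ := fun k => ent p (fun ω (i : Fin k) => Y i ω)
  have hstep : ∀ t, condMutInfo p A (Y t) (fun ω (i : Fin t) => Y i ω)
      = (H t - H (t + 1)) + (F (t + 1) - F t) := by
    intro t
    have hsnoc : ∀ ω, (fun i : Fin (t + 1) => Y i ω)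
        = Fin.snocEquiv (fun _ => β) (Y t ω, fun i : Fin t => Y i ω) := fun ω =>
      (Fin.snoc_init_self (α := fun _ => β) _).symm
    have hF : F (t + 1) = ent p (fun ω => (Y t ω, fun i : Fin t => Y i ω)) :=
      ent_eq_of_injective (Equiv.injective _) hsnoc
    have hH : H (t + 1) = ent p (fun ω => (A ω, Y t ω, fun i : Fin t => Y i ω)) :=
      ent_eq_of_injective (Function.injective_id.prodMap (Equiv.injective _))
        fun ω => Prod.ext rfl (hsnoc ω)
    rw [hF, hH, condMutInfo]
    ring
  have hH0 : H 0 = ent p A := ent_congr fun ω ω' => by simp [funext_iff]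
  have hF0 : F 0 = 0 := ent_eq_zero_of_subsingleton hp _
  rw [Finset.sum_congr rfl fun t _ => hstep t, Finset.sum_add_distrib, Finset.sum_range_sub',
    Finset.sum_range_sub, hH0, hF0, mutInfo]
  ring

end InformationMeasures

section SequentialKernels

variable {β : Type*}

lemma take_snoc {n : ℕ} (m : ℕ) (h : m ≤ n) (v : Fin n → β) (b : β) :
    Fin.take m (h.trans n.le_succ) (Fin.snoc (α := fun _ => β) v b) = Fin.take m h v := by
  rw [← Fin.take_init, Fin.init_snoc]

lemma sum_prod_take_eq_one [Fintype β] :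
    ∀ {n : ℕ} (g : (t : Fin n) → (Fin t → β) → β → ℝ), (∀ t yp, ∑ b, g t yp b = 1) →
      ∑ y : Fin n → β, ∏ t, g t (Fin.take t t.isLt.le y) (y t) = 1
  | 0, _, _ => by simp
  | n + 1, g, hg => by
    have hsplit : ∀ v b, ∏ t, g t (Fin.take t t.isLt.le (Fin.snocEquiv (fun _ => β) (b, v)))
          (Fin.snocEquiv (fun _ => β) (b, v) t)
        = (∏ t : Fin n, g t.castSucc (Fin.take t t.isLt.le v) (v t)) * g (Fin.last n) v b := by
      intro v b
      simp [Fin.snocEquiv, Fin.prod_univ_castSucc, take_snoc]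
    rw [← (Fin.snocEquiv fun _ => β).sum_comp, Fintype.sum_prod_type, Finset.sum_comm]
    simp only [hsplit, ← Finset.mul_sum, hg, mul_one]
    exact sum_prod_take_eq_one (fun t => g t.castSucc) fun t => hg t.castSucc

end SequentialKernels

section JointLaw

variable {mx my ms : ℕ} {PS1 : Fin (ms + 1) → ℝ} {PX1 : Fin (mx + 1) → ℝ}
  {Qm : Fin (mx + 1) → Fin (mx + 1) → ℝ} {q : PolicyA mx my ms}

lemma markovWt_nonneg (hPX1 : IsPMF PX1) (hQm : ∀ x, IsPMF (Qm x)) {n : ℕ}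
    (x : Fin n → Fin (mx + 1)) : 0 ≤ markovWt PX1 Qm x :=
  Finset.prod_nonneg fun t _ => by
    split_ifs
    exacts [hPX1.1 _, (hQm _).1 _]

lemma sum_markovWt (hPX1 : IsPMF PX1) (hQm : ∀ x, IsPMF (Qm x)) (n : ℕ) :
    ∑ x : Fin n → Fin (mx + 1), markovWt PX1 Qm x = 1 :=
  sum_prod_take_eq_one
    (fun t xp xt => if h : (t : ℕ) = 0 then PX1 xt else Qm (xp ⟨t - 1, by omega⟩) xt)
    fun t xp => by split_ifs <;> simp [hPX1.2, (hQm _).2]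

lemma sum_prod_policy (hq : CondPMFA q) {n : ℕ} (s1 : Fin (ms + 1)) (x : Fin n → Fin (mx + 1)) :
    ∑ y : Fin n → Fin (my + 1), ∏ t : Fin n,
      q t (prefX ((s1, x, y) : Traj mx my ms n) t) s1 (prefY ((s1, x, y) : Traj mx my ms n) t)
        (y t) = 1 :=
  sum_prod_take_eq_one (fun t yp yt => q t (Fin.take (t + 1) t.isLt x) s1 yp yt)
    fun _ _ => (hq _ _ _ _).2

lemma isPMF_jointAMarkov (hPS1 : IsPMF PS1) (hPX1 : IsPMF PX1) (hQm : ∀ x, IsPMF (Qm x))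
    (hq : CondPMFA q) (n : ℕ) : IsPMF (jointAMarkov PS1 PX1 Qm q n) := by
  refine ⟨fun ω => ?_, ?_⟩
  · exact mul_nonneg (mul_nonneg (hPS1.1 _) (markovWt_nonneg hPX1 hQm _))
      (Finset.prod_nonneg fun t _ => (hq _ _ _ _).1 _)
  · simp only [Fintype.sum_prod_type, jointAMarkov, ← Finset.mul_sum, sum_prod_policy hq,
      mul_one, sum_markovWt hPX1 hQm, hPS1.2]

end JointLaw

section Trajectories

variable {mx my ms T : ℕ}

lemma Yat_val (ω : Traj mx my ms T) (i : Fin T) : Yat ω i = ((ω.2.2 i : ℕ) : ℤ) :=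
  dif_pos i.isLt

lemma Xat_congr {ω ω' : Traj mx my ms T} (hx : ω.2.1 = ω'.2.1) (t : ℕ) : Xat ω t = Xat ω' t := by
  rw [Xat, Xat, hx]

lemma Sat_congr {ω ω' : Traj mx my ms T} {t : ℕ} (hs : ω.1 = ω'.1) (hx : ω.2.1 = ω'.2.1)
    (hy : ∀ i < t, Yat ω i = Yat ω' i) : Sat ω t = Sat ω' t := by
  rw [Sat, Sat, hs]
  congr 1
  exact Finset.sum_congr rfl fun i hi => by rw [hy i (mem_range.mp hi), Xat_congr hx]

end Trajectories

theorem leakage_ge_sum_condMutInfo_general (mx my ms T : ℕ)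
    (PX1 : Fin (mx + 1) → ℝ) (hPX1 : IsPMF PX1)
    (Qm : Fin (mx + 1) → Fin (mx + 1) → ℝ) (hQm : ∀ x, IsPMF (Qm x))
    (PS1 : Fin (ms + 1) → ℝ) (hPS1 : IsPMF PS1)
    (q : PolicyA mx my ms) (hq : CondPMFA q) :
    ∑ t ∈ Finset.range T,
        condMutInfo (jointAMarkov PS1 PX1 Qm q T)
          (fun ω => (Xat ω t, Sat ω t)) (fun ω => Yat ω t)
          (fun ω => fun i : Fin t => Yat ω (i : ℕ))
      ≤ mutInfo (jointAMarkov PS1 PX1 Qm q T)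
          (fun ω => (ω.1, ω.2.1)) (fun ω => ω.2.2) := by
  have hp := isPMF_jointAMarkov hPS1 hPX1 hQm hq T
  calc _ ≤ ∑ t ∈ Finset.range T,
        condMutInfo (jointAMarkov PS1 PX1 Qm q T) (fun ω => (ω.1, ω.2.1)) (fun ω => Yat ω t)
          (fun ω => fun i : Fin t => Yat ω (i : ℕ)) := by
        refine Finset.sum_le_sum fun t _ => condMutInfo_le_of_determined hp.1 _ ?_
        intro ω ω' hA hY
        obtain ⟨hs, hx⟩ := Prod.mk.inj hA
        rw [Xat_congr hx, Sat_congr hs hx fun i hi => congrFun hY ⟨i, hi⟩]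
    _ = mutInfo (jointAMarkov PS1 PX1 Qm q T) (fun ω => (ω.1, ω.2.1))
          (fun ω => fun i : Fin T => Yat ω (i : ℕ)) :=
        (mutInfo_eq_sum_condMutInfo hp.2 _ (fun t ω => Yat ω t) T).symm
    _ = _ := mutInfo_congr_right _ fun ω ω' => by simp [funext_iff, Yat_val, Fin.val_inj]

/-- For Markov demand, an independent initial battery state, battery
dynamics `S_{t+1} = S_t + Y_t - X_t`, and any causal policy:
`I(S₁, X^T; Y^T) ≥ Σ_{t=1}^T I(X_t, S_t; Y_t | Y^{t-1})`. -/
theorem leakage_ge_sum_condMutInfo (mx my ms T : ℕ) (hxy : mx ≤ my)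
    (PX1 : Fin (mx + 1) → ℝ) (hPX1 : IsPMF PX1)
    (Qm : Fin (mx + 1) → Fin (mx + 1) → ℝ) (hQm : ∀ x, IsPMF (Qm x))
    (PS1 : Fin (ms + 1) → ℝ) (hPS1 : IsPMF PS1)
    (q : PolicyA mx my ms) (hq : CondPMFA q) :
    ∑ t ∈ Finset.range T,
        condMutInfo (jointAMarkov PS1 PX1 Qm q T)
          (fun ω => (Xat ω t, Sat ω t)) (fun ω => Yat ω t)
          (fun ω => fun i : Fin t => Yat ω (i : ℕ))
      ≤ mutInfo (jointAMarkov PS1 PX1 Qm q T)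
          (fun ω => (ω.1, ω.2.1)) (fun ω => ω.2.2) :=
  leakage_ge_sum_condMutInfo_general mx my ms T PX1 hPX1 Qm hQm PS1 hPS1 q hq

end SmartMeter
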